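/- arXiv:1803.02683 — 5 statements merged into one kernel-verified Lean document; each statement's English description precedes it below -/
import Mathlib

section
/- Let M be a right R-module whose endomorphism ring S = End_R(M) is strongly regular. Then for every endomorphism f : M → M, M is the internal direct sum of ker f and im f, i.e. M = ker f ⊕ im f. -/
/-- If the endomorphism ring of a module `M` is strongly regular, then
`M = ker f ⊕ im f` (internal direct sum) for every endomorphism `f`. -/
theorem stmt_3 (R M : Type*) [Ring R] [AddCommGroup M] [Module R M]
    (h : ∀ a : Module.End R M, ∃ b : Module.End R M, a = a ^ 2 * b) :
    ∀ f : Module.End R M,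
      LinearMap.ker f ⊓ LinearMap.range f = ⊥ ∧
        LinearMap.ker f ⊔ LinearMap.range f = ⊤ := by
  -- the ring is reduced
  have hred : ∀ a : Module.End R M, a * a = 0 → a = 0 := by
    intro a ha
    obtain ⟨b, hb⟩ := h a
    rw [hb, sq, ha, zero_mul]
  intro f
  obtain ⟨b, hb⟩ := h f
  have key : f * f * b = f := by rw [← sq, ← hb]
  -- f = f * b * f
  have h1 : f * b * f = f := by
    have hsq : (f - f * b * f) * (f - f * b * f) = 0 := by
      have e1 : f * (f * b * f) = f * f := by
        rw [← mul_assoc, ← mul_assoc, key]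
      have e2 : (f * b * f) * (f * b * f) = f * b * (f * f) := by
        calc (f * b * f) * (f * b * f) = f * b * (f * (f * b * f)) := by
              noncomm_ring
          _ = f * b * (f * f) := by rw [e1]
      calc (f - f * b * f) * (f - f * b * f)
          = f * f - f * (f * b * f) - (f * b * f) * f + (f * b * f) * (f * b * f) := by
            noncomm_ring
        _ = f * f - f * f - f * b * (f * f) + f * b * (f * f) := by
            rw [e1, e2]; noncomm_ring
        _ = 0 := by noncomm_ring
    exact (sub_eq_zero.mp (hred _ hsq)).symm
  -- e = b * f is idempotent
  set e : Module.End R M := b * f with he_def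
  have hidem : e * e = e := by
    rw [he_def]
    calc b * f * (b * f) = b * (f * b * f) := by noncomm_ring
      _ = b * f := by rw [h1]
  -- idempotents in reduced rings are central: e * r = r * e
  have hidem' : ∀ y : Module.End R M, e * (e * y) = e * y := fun y => by
    rw [← mul_assoc, hidem]
  have hcentral : ∀ r : Module.End R M, e * r = r * e := by
    intro r
    have c1 : e * r - e * r * e = 0 := by
      apply hred
      simp only [sub_mul, mul_sub, mul_assoc, hidem']
      abel
    have c2 : r * e - e * r * e = 0 := by
      apply hred
      simp only [sub_mul, mul_sub, mul_assoc, hidem']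
      abel
    rw [sub_eq_zero.mp c1, sub_eq_zero.mp c2]
  -- f = b * f * f
  have h4 : b * (f * f) = f := by
    have : f * e = e * f := (hcentral f).symm
    calc b * (f * f) = e * f := by rw [he_def]; noncomm_ring
      _ = f * e := this.symm
      _ = f * b * f := by rw [he_def]; noncomm_ring
      _ = f := h1
  constructor
  · rw [eq_bot_iff]
    rintro x ⟨hx1, hx2⟩
    obtain ⟨y, rfl⟩ := hx2
    have hx1' : f (f y) = 0 := LinearMap.mem_ker.mp hx1
    have : (b * (f * f)) y = f y := by rw [h4]
    simp only [Module.End.mul_apply] at this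
    rw [Submodule.mem_bot, ← this, hx1', map_zero]
  · rw [eq_top_iff]
    intro x _
    have hker : f (x - f (b x)) = 0 := by
      have : (f * f * b) x = f x := by rw [key]
      simp only [Module.End.mul_apply] at this
      rw [map_sub, this, sub_self]
    have hx : x = (x - f (b x)) + f (b x) := by abel
    rw [hx]
    exact Submodule.add_mem_sup (LinearMap.mem_ker.mpr hker) ⟨b x, rfl⟩
end

section
/- Let M be a right R-module such that for every endomorphism f : M → M one has M = ker f ⊕ im f (internal direct sum). Then the endomorphism ring End_R(M) is strongly regular. -/
/-!
If `M = ker f ⊕ range f`, then `range f = f (ker f ⊔ range f) = f (range f)`, so `f` maps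
`range f` onto itself, and injectively because `ker f ⊓ range f = ⊥`. Inverting this automorphism
of `range f` and extending it by zero on `ker f` gives `b` with `f ^ 2 * b = f`.
-/

namespace Module.End

open LinearMap Submodule

variable {R M : Type*} [Ring R] [AddCommGroup M] [Module R M] {f : Module.End R M}

lemma range_mul_self_eq_range (hf : Codisjoint (ker f) (range f)) :
    range (f * f) = range f := by
  calc range (f * f) = (range f).map f := by rw [mul_eq_comp, range_comp]
    _ = (ker f ⊔ range f).map f := by
      rw [Submodule.map_sup, le_ker_iff_map.1 (le_refl (ker f)), bot_sup_eq]
    _ = range f := by rw [hf.eq_top, Submodule.map_top]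

lemma mapsTo_range_self (f : Module.End R M) : ∀ x ∈ range f, f x ∈ range f :=
  fun _ _ ↦ mem_range_self f _

lemma bijective_restrict_range (hf : IsCompl (ker f) (range f)) :
    Function.Bijective (f.restrict (mapsTo_range_self f)) := by
  refine ⟨(injective_restrict_iff _).2 hf.disjoint.symm, ?_⟩
  rintro ⟨y, hy⟩
  rw [← range_mul_self_eq_range hf.codisjoint] at hy
  obtain ⟨x, rfl⟩ := hy
  exact ⟨⟨f x, mem_range_self f x⟩, rfl⟩

theorem exists_eq_sq_mul_of_isCompl_ker_range (hf : IsCompl (ker f) (range f)) :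
    ∃ b : Module.End R M, f = f ^ 2 * b := by
  let e := LinearEquiv.ofBijective _ (bijective_restrict_range hf)
  refine ⟨ofIsCompl hf 0 ((range f).subtype ∘ₗ e.symm.toLinearMap), ?_⟩
  refine ext_on_codisjoint hf.codisjoint (fun x hx ↦ ?_) (fun y hy ↦ ?_)
  · simp [show f x = 0 from hx, ofIsCompl_apply_left hf ⟨x, hx⟩]
  · have hfe : f (e.symm ⟨y, hy⟩) = y := congrArg Subtype.val (e.apply_symm_apply ⟨y, hy⟩)
    simp [pow_two, ofIsCompl_apply_right hf ⟨y, hy⟩, hfe]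

end Module.End

/-- If `M = ker f ⊕ im f` (internal direct sum) for every endomorphism `f` of `M`,
then the endomorphism ring of `M` is strongly regular. -/
theorem stmt_4 (R M : Type*) [Ring R] [AddCommGroup M] [Module R M]
    (h : ∀ f : Module.End R M,
      LinearMap.ker f ⊓ LinearMap.range f = ⊥ ∧
        LinearMap.ker f ⊔ LinearMap.range f = ⊤) :
    ∀ a : Module.End R M, ∃ b : Module.End R M, a = a ^ 2 * b := fun a ↦
  Module.End.exists_eq_sq_mul_of_isCompl_ker_range
    ⟨disjoint_iff.2 (h a).1, codisjoint_iff.2 (h a).2⟩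
end

section
/- Let M, N be R-modules, M' a direct summand of M and N' a direct summand of N. If every homomorphism f : M → N satisfies that ker f is a direct summand of M, then every homomorphism g : M' → N' satisfies that ker g is a direct summand of M'. -/
/-! The projection `π : M → M'` along a complement of `M'` is surjective with kernel contained
in `ker (g ∘ π)` for every `g : M' → N'`, so it carries any complement of `ker (g ∘ π)` to a
complement of `π (ker (g ∘ π)) = ker g`. Composing with the inclusion `N' → N` does not change
kernels, so the hypothesis applies to `g ∘ π` viewed as a map `M → N`. -/

section

open LinearMap

variable {R M M₂ P : Type*} [Ring R] [AddCommGroup M] [Module R M]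
  [AddCommGroup M₂] [Module R M₂] [AddCommGroup P] [Module R P]

theorem Submodule.isCompl_map_of_ker_le {f : M →ₗ[R] M₂} (hf : Function.Surjective f)
    {p q : Submodule R M} (hp : ker f ≤ p) (h : IsCompl p q) :
    IsCompl (p.map f) (q.map f) := by
  constructor
  · rw [Submodule.disjoint_def]
    rintro _ hyp ⟨y, hyq, rfl⟩
    have hy : y ∈ p := by
      rw [← Submodule.comap_map_eq_self hp]
      exact hyp
    rw [Submodule.disjoint_def.mp h.disjoint y hy hyq, map_zero]
  · rw [codisjoint_iff, ← Submodule.map_sup, h.sup_eq_top, Submodule.map_top,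
      range_eq_top.mpr hf]

theorem LinearMap.isCompl_ker_of_isCompl_ker_comp {π : M →ₗ[R] M₂}
    (hπ : Function.Surjective π) (g : M₂ →ₗ[R] P) {K : Submodule R M}
    (h : IsCompl (ker (g ∘ₗ π)) K) : IsCompl (ker g) (K.map π) := by
  have := Submodule.isCompl_map_of_ker_le hπ (ker_le_ker_comp π g) h
  rwa [ker_comp, Submodule.map_comap_eq_of_surjective hπ] at this

end

theorem stmt_15_general (R M N : Type*) [Ring R] [AddCommGroup M] [Module R M]
    [AddCommGroup N] [Module R N]
    (M' : Submodule R M) (N' : Submodule R N)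
    (hM' : ∃ C : Submodule R M, IsCompl M' C)
    (h : ∀ f : M →ₗ[R] N, ∃ K : Submodule R M, IsCompl (LinearMap.ker f) K) :
    ∀ g : M' →ₗ[R] N', ∃ K : Submodule R M', IsCompl (LinearMap.ker g) K := by
  intro g
  obtain ⟨C, hC⟩ := hM'
  obtain ⟨K, hK⟩ := h (N'.subtype ∘ₗ g ∘ₗ M'.projectionOnto C hC)
  rw [LinearMap.ker_comp_of_ker_eq_bot _ N'.ker_subtype] at hK
  exact ⟨_, LinearMap.isCompl_ker_of_isCompl_ker_comp (M'.projectionOnto_surjective hC) g hK⟩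

/-- If `N` is `M`-Rickart, `M'` is a direct summand of `M` and `N'` a direct summand
of `N`, then `N'` is `M'`-Rickart. -/
theorem stmt_15 (R M N : Type*) [Ring R] [AddCommGroup M] [Module R M]
    [AddCommGroup N] [Module R N]
    (M' : Submodule R M) (N' : Submodule R N)
    (hM' : ∃ C : Submodule R M, IsCompl M' C)
    (hN' : ∃ C : Submodule R N, IsCompl N' C)
    (h : ∀ f : M →ₗ[R] N, ∃ K : Submodule R M, IsCompl (LinearMap.ker f) K) :
    ∀ g : M' →ₗ[R] N', ∃ K : Submodule R M', IsCompl (LinearMap.ker g) K :=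
  stmt_15_general R M N M' N' hM' h
end

section
/- Let 0 → N₁ → N → N₂ → 0 be a short exact sequence of R-modules and M an R-module. If for every f : M → N₁ and every g : M → N₂ the kernels ker f and ker g are fully invariant direct summands of M, then for every h : M → N, ker h is a fully invariant direct summand of M. -/
/-!
Let `g = p ∘ h` and let `e` be the projection of `M` onto the summand `ker g`. Then `h ∘ e` lands
in `ker p = range i`, so it factors as `i ∘ f` with `f : M → N₁`, and `ker h = ker f ⊓ ker g`.
Intersections of fully invariant direct summands are again such: if `e`, `e'` are projections
onto `A`, `B` and `B` is stable under `e`, then `e' e e' = e e'`, so `e e'` is an idempotent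
with range `A ⊓ B`.
-/

def FullyInvariantDirectSummand {R M : Type*} [Ring R] [AddCommGroup M] [Module R M]
    (K : Submodule R M) : Prop :=
  (∃ K' : Submodule R M, IsCompl K K') ∧ ∀ φ : Module.End R M, K.map φ ≤ K

open LinearMap Submodule

section

variable {R M : Type*} [Ring R] [AddCommGroup M] [Module R M]

theorem Submodule.exists_isCompl_inf {A A' B B' : Submodule R M} (hA : IsCompl A A')
    (hB : IsCompl B B') (hBA : B.map (A.projection A' hA) ≤ B) :
    ∃ C : Submodule R M, IsCompl (A ⊓ B) C := by
  set e := A.projection A' hA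
  set e' := B.projection B' hB
  have hconj : e' * e * e' = e * e' := by
    have := (isIdempotentElem_projection hB).range_mem_invtSubmodule_iff (T := e)
    rw [range_projection] at this
    exact this.mp ((Module.End.mem_invtSubmodule_iff_map_le _).mpr hBA)
  have hidem : IsIdempotentElem (e * e') := by
    calc e * e' * (e * e') = e * (e' * e * e') := by simp only [mul_assoc]
      _ = e * e' := by rw [hconj, ← mul_assoc, (isIdempotentElem_projection hA).eq]
  have hrange : range (e * e') = A ⊓ B := by
    refine le_antisymm (le_inf ?_ ?_) fun x ⟨hxA, hxB⟩ => ⟨x, ?_⟩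
    · exact (range_comp_le_range e' e).trans (range_projection hA).le
    · rw [← hconj, ← range_projection hB]
      exact range_comp_le_range (e * e') e'
    · simp [e, e', projection_apply_of_mem_left hB hxB, projection_apply_of_mem_left hA hxA]
  exact ⟨_, hrange ▸ hidem.isCompl⟩

theorem FullyInvariantDirectSummand.inf {A B : Submodule R M} (hA : FullyInvariantDirectSummand A)
    (hB : FullyInvariantDirectSummand B) : FullyInvariantDirectSummand (A ⊓ B) := by
  obtain ⟨⟨A', hA'⟩, hAinv⟩ := hA
  obtain ⟨⟨B', hB'⟩, hBinv⟩ := hB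
  exact ⟨exists_isCompl_inf hA' hB' (hBinv _),
    fun φ => (map_inf_le φ).trans (inf_le_inf (hAinv φ) (hBinv φ))⟩

theorem LinearMap.exists_ker_eq_ker_inf_ker_comp {N N₁ N₂ : Type*} [AddCommGroup N] [Module R N]
    [AddCommGroup N₁] [Module R N₁] [AddCommGroup N₂] [Module R N₂] {i : N₁ →ₗ[R] N}
    {p : N →ₗ[R] N₂} (hi : Function.Injective i) (hexact : ker p ≤ range i) (h : M →ₗ[R] N)
    {K : Submodule R M} (hK : IsCompl (ker (p ∘ₗ h)) K) :
    ∃ f : M →ₗ[R] N₁, ker h = ker f ⊓ ker (p ∘ₗ h) := by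
  set e := (ker (p ∘ₗ h)).projection K hK
  have hmem (x : M) : h (e x) ∈ range i := hexact (projection_apply_mem hK x)
  refine ⟨(LinearEquiv.ofInjective i hi).symm.toLinearMap ∘ₗ (h ∘ₗ e).codRestrict _ hmem, ?_⟩
  rw [LinearEquiv.ker_comp, ker_codRestrict]
  ext x
  simp only [mem_inf, mem_ker, comp_apply]
  constructor
  · intro hx
    have hxg : p (h x) = 0 := by rw [hx, map_zero]
    rw [projection_apply_of_mem_left hK hxg]
    exact ⟨hx, hxg⟩
  · rintro ⟨hxe, hxg⟩
    rwa [projection_apply_of_mem_left hK hxg] at hxe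

end

theorem stmt_16_general (R M N N₁ N₂ : Type*) [Ring R]
    [AddCommGroup M] [Module R M] [AddCommGroup N] [Module R N]
    [AddCommGroup N₁] [Module R N₁] [AddCommGroup N₂] [Module R N₂]
    (i : N₁ →ₗ[R] N) (p : N →ₗ[R] N₂)
    (hi : Function.Injective i)
    (hexact : LinearMap.range i = LinearMap.ker p)
    (h₁ : ∀ f : M →ₗ[R] N₁, FullyInvariantDirectSummand (LinearMap.ker f))
    (h₂ : ∀ g : M →ₗ[R] N₂, FullyInvariantDirectSummand (LinearMap.ker g)) :
    ∀ h : M →ₗ[R] N, FullyInvariantDirectSummand (LinearMap.ker h) := by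
  intro h
  obtain ⟨⟨K, hK⟩, -⟩ := h₂ (p ∘ₗ h)
  obtain ⟨f, hf⟩ := exists_ker_eq_ker_inf_ker_comp hi hexact.ge h hK
  rw [hf]
  exact (h₁ f).inf (h₂ _)

/-- Given a short exact sequence `0 → N₁ → N → N₂ → 0`, if `N₁` and `N₂` are strongly
`M`-Rickart, then so is `N`. -/
theorem stmt_16 (R M N N₁ N₂ : Type*) [Ring R]
    [AddCommGroup M] [Module R M] [AddCommGroup N] [Module R N]
    [AddCommGroup N₁] [Module R N₁] [AddCommGroup N₂] [Module R N₂]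
    (i : N₁ →ₗ[R] N) (p : N →ₗ[R] N₂)
    (hi : Function.Injective i) (hp : Function.Surjective p)
    (hexact : LinearMap.range i = LinearMap.ker p)
    (h₁ : ∀ f : M →ₗ[R] N₁, FullyInvariantDirectSummand (LinearMap.ker f))
    (h₂ : ∀ g : M →ₗ[R] N₂, FullyInvariantDirectSummand (LinearMap.ker g)) :
    ∀ h : M →ₗ[R] N, FullyInvariantDirectSummand (LinearMap.ker h) :=
  stmt_16_general R M N N₁ N₂ i p hi hexact h₁ h₂
end

section
/- Let M be an R-module such that every direct summand of M is fully invariant (M is weak duo). Then for every idempotent e ∈ End_R(M) and every f ∈ End_R(M), f e = e f e. If in addition ker f is a direct summand for all f, then every idempotent of End_R(M) is central. -/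
/-- If every direct summand of `M` is fully invariant (`M` is weak duo), then for every
idempotent `e` and every endomorphism `f` one has `f ∘ e = e ∘ f ∘ e`; if moreover `M`
is self-Rickart, then every idempotent of `End M` is central. -/
theorem stmt_19 (R M : Type*) [Ring R] [AddCommGroup M] [Module R M]
    (hduo : ∀ K : Submodule R M, (∃ K' : Submodule R M, IsCompl K K') →
      ∀ f : Module.End R M, K.map f ≤ K) :
    (∀ e : Module.End R M, IsIdempotentElem e →
      ∀ f : Module.End R M, f * e = e * f * e) ∧
    ((∀ f : Module.End R M, ∃ K : Submodule R M, IsCompl (LinearMap.ker f) K) →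
      ∀ e : Module.End R M, IsIdempotentElem e →
        ∀ f : Module.End R M, e * f = f * e) := by
  have key : ∀ e : Module.End R M, IsIdempotentElem e →
      ∀ f : Module.End R M, f * e = e * f * e := by
    intro e he f
    have heapp : ∀ y : M, e (e y) = e y := fun y =>
      congrFun (congrArg DFunLike.coe he) y
    have hcompl : IsCompl (LinearMap.range e) (LinearMap.ker e) := by
      constructor
      · rw [disjoint_iff_inf_le]
        rintro x ⟨⟨y, rfl⟩, hx⟩
        have h0 : e (e y) = 0 := hx
        rw [heapp y] at h0
        simp [h0]
      · rw [codisjoint_iff_le_sup]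
        intro x _
        have hx : x = e x + (x - e x) := by abel
        rw [hx]
        refine Submodule.add_mem_sup ⟨x, rfl⟩ ?_
        simp [map_sub, heapp x]
    have hmap := hduo (LinearMap.range e) ⟨_, hcompl⟩ f
    ext x
    obtain ⟨y, hy⟩ : f (e x) ∈ LinearMap.range e := hmap ⟨e x, ⟨x, rfl⟩, rfl⟩
    simp only [Module.End.mul_apply]
    rw [← hy, heapp y, hy]
  refine ⟨key, fun _ e he f => ?_⟩
  have h1 := key e he f
  have h2 := key (1 - e) he.one_sub f
  simp only [mul_sub, sub_mul, mul_one, one_mul] at h2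
  -- h2 : f - f*e = f - e*f - (f*e - e*f*e)
  rw [sub_eq_zero.mpr h1, sub_zero] at h2
  exact (sub_right_inj.mp h2).symm
end
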